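/- arXiv:1702.03825 — 5 statements merged into one kernel-verified Lean document; each statement's English description precedes it below -/
import Mathlib

section
/- For any maximal α-connected component C of a vertex-scalar graph G, there exists a vertex v in G such that MCC(v) = C; specifically, v can be taken to be a vertex of minimum scalar value in C. -/
variable {V : Type*} [Fintype V]

/-- `C` is a maximal α-connected component of the vertex-scalar graph `(G, f)`. -/
def IsMACC (G : SimpleGraph V) (f : V → ℝ) (α : ℝ) (C : Set V) : Prop :=
  C.Nonempty ∧ (∀ v ∈ C, α ≤ f v) ∧
  (∀ v ∈ C, ∀ v', G.Adj v v' → v' ∉ C → f v' < α) ∧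
  (G.induce C).Connected

/-- Every maximal α-connected component `C` is `MCC(v)` for some vertex `v`,
namely a vertex of minimum scalar value in `C`. -/
theorem stmt0 (G : SimpleGraph V) (f : V → ℝ) (α : ℝ) (C : Set V)
    (hC : IsMACC G f α C) :
    ∃ v ∈ C, (∀ u ∈ C, f v ≤ f u) ∧ IsMACC G f (f v) C := by
  obtain ⟨hne, hge, hbd, hconn⟩ := hC
  obtain ⟨v, hv, hmin⟩ := Set.exists_min_image C f C.toFinite hne
  refine ⟨v, hv, hmin, ⟨v, hv⟩, hmin, ?_, hconn⟩
  intro u hu v' hadj hv'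
  exact lt_of_lt_of_le (hbd u hu v' hadj hv') (hge v hv)
end

section
/- If C₁ is a maximal α₁-connected component and C₂ is a maximal α₂-connected component of the same vertex-scalar graph, and some vertex of C₁ is adjacent to or equal to some vertex of C₂, then C₁ ⊆ C₂ or C₂ ⊆ C₁. -/
variable {V : Type*} [Fintype V]

lemma macc_subset (G : SimpleGraph V) (f : V → ℝ) (α₁ α₂ : ℝ) (C₁ C₂ : Set V)
    (h₁ : IsMACC G f α₁ C₁) (h₂ : IsMACC G f α₂ C₂) (hle : α₂ ≤ α₁)
    (u : V) (hu1 : u ∈ C₁) (hu2 : u ∈ C₂) : C₁ ⊆ C₂ := by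
  intro v hv
  obtain ⟨-, hα₁, -, hc⟩ := h₁
  obtain ⟨-, -, hmax₂, -⟩ := h₂
  obtain ⟨w⟩ := hc.preconnected ⟨u, hu1⟩ ⟨v, hv⟩
  have key : ∀ {a b : C₁} (_ : (G.induce C₁).Walk a b), (a : V) ∈ C₂ → (b : V) ∈ C₂ := by
    intro a b p
    induction p with
    | nil => exact id
    | cons hadj _ ih =>
      rename_i x y _ _
      intro hx
      apply ih
      by_contra hy
      have h1 : f (y : V) < α₂ := hmax₂ x hx y hadj hy
      have h2 : α₁ ≤ f (y : V) := hα₁ y y.2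
      linarith
  exact key w hu2

/-- If a maximal α₁-connected component and a maximal α₂-connected component are
connected (share a vertex or have adjacent vertices), one contains the other. -/
theorem stmt2 (G : SimpleGraph V) (f : V → ℝ) (α₁ α₂ : ℝ) (C₁ C₂ : Set V)
    (h₁ : IsMACC G f α₁ C₁) (h₂ : IsMACC G f α₂ C₂)
    (hconn : ∃ u ∈ C₁, ∃ w ∈ C₂, u = w ∨ G.Adj u w) :
    C₁ ⊆ C₂ ∨ C₂ ⊆ C₁ := by
  obtain ⟨u, hu, w, hw, huw⟩ := hconn
  rcases le_total α₂ α₁ with hle | hle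
  · left
    refine macc_subset G f α₁ α₂ C₁ C₂ h₁ h₂ hle u hu ?_
    rcases huw with rfl | hadj
    · exact hw
    · by_contra hu2
      have h1 : f u < α₂ := h₂.2.2.1 w hw u hadj.symm hu2
      have h2 : α₁ ≤ f u := h₁.2.1 u hu
      linarith
  · right
    refine macc_subset G f α₂ α₁ C₂ C₁ h₂ h₁ hle w hw ?_
    rcases huw with rfl | hadj
    · exact hu
    · by_contra hw1
      have h1 : f w < α₁ := h₁.2.2.1 u hu w hadj hw1
      have h2 : α₂ ≤ f w := h₂.2.1 w hw
      linarith
end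

section
/- In an edge-scalar graph G where each edge e has scalar value KT(e) (the maximum K such that e belongs to a K-truss of G), every maximal α-edge-connected component of G is a K-truss of G with K = α. -/
variable {V : Type*} [Fintype V]

/-- Two edges (as unordered pairs) share a vertex. -/
def Shares (a b : Sym2 V) : Prop := ∃ w : V, w ∈ a ∧ w ∈ b

/-- \`D\` is a maximal α-edge-connected component of the edge-scalar graph
\`(G, g)\`: a nonempty, edge-connected set of edges of \`G\`, all with scalar ≥ α,
such that every edge of \`G\` outside \`D\` sharing a vertex with an edge of \`D\`
has scalar < α. -/
def IsEdgeMACC (G : SimpleGraph V) (g : Sym2 V → ℝ) (α : ℝ) (D : Set (Sym2 V)) : Prop :=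
  D.Nonempty ∧ D ⊆ G.edgeSet ∧ (∀ e ∈ D, α ≤ g e) ∧
  (∀ e ∈ D, ∀ e' ∈ G.edgeSet, e' ∉ D → Shares e e' → g e' < α) ∧
  (∀ e ∈ D, ∀ e' ∈ D,
    Relation.ReflTransGen (fun a b => a ∈ D ∧ b ∈ D ∧ Shares a b) e e')

/-- Number of triangles of the edge `s(u,v)` within the edge set `D`. -/
noncomputable def triCount (D : Set (Sym2 V)) (u v : V) : ℕ :=
  {w : V | s(u, w) ∈ D ∧ s(v, w) ∈ D}.ncard

/-- `D` is a `K`-truss of `G`: each of its edges participates in at least `K`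
triangles within `D`. -/
def IsKTruss (G : SimpleGraph V) (K : ℕ) (D : Set (Sym2 V)) : Prop :=
  D.Nonempty ∧ D ⊆ G.edgeSet ∧
  ∀ e ∈ D, ∀ u v : V, e = s(u, v) → K ≤ triCount D u v

/-- `KT(e)`: the maximum `K` such that `e` belongs to a `K`-truss of `G`. -/
noncomputable def trussNum (G : SimpleGraph V) (e : Sym2 V) : ℕ :=
  sSup {K : ℕ | ∃ D : Set (Sym2 V), IsKTruss G K D ∧ e ∈ D}

/-! Let `e ∈ D` and let `T` be a `KT(e)`-truss containing `e`. Every edge of `T` at an endpoint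
of `e` has truss number at least `KT(e) ≥ α`, so by maximality of `D` it lies in `D`. Hence every
triangle on `e` in `T` is a triangle in `D`, and `e` lies in at least `KT(e) ≥ α` of them. -/

lemma IsKTruss.le_card {G : SimpleGraph V} {K : ℕ} {T : Set (Sym2 V)} (hT : IsKTruss G K T) :
    K ≤ Fintype.card V := by
  obtain ⟨⟨e, he⟩, -, htri⟩ := hT
  induction e using Sym2.ind with
  | _ u v =>
    calc K ≤ triCount T u v := htri _ he u v rfl
      _ ≤ Fintype.card V := by
        simpa only [triCount, Nat.card_eq_fintype_card] using Set.ncard_le_card (α := V) _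

lemma bddAbove_trussLevels (G : SimpleGraph V) (e : Sym2 V) :
    BddAbove {K : ℕ | ∃ T : Set (Sym2 V), IsKTruss G K T ∧ e ∈ T} :=
  ⟨Fintype.card V, fun _ ⟨_, hT, _⟩ => hT.le_card⟩

lemma IsKTruss.le_trussNum {G : SimpleGraph V} {K : ℕ} {T : Set (Sym2 V)} (hT : IsKTruss G K T)
    {e : Sym2 V} (he : e ∈ T) : K ≤ trussNum G e :=
  le_csSup (bddAbove_trussLevels G e) ⟨T, hT, he⟩

lemma exists_isKTruss_trussNum {G : SimpleGraph V} {e : Sym2 V} (he : 0 < trussNum G e) :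
    ∃ T : Set (Sym2 V), IsKTruss G (trussNum G e) T ∧ e ∈ T := by
  refine Nat.sSup_mem ?_ (bddAbove_trussLevels G e)
  by_contra hempty
  rw [Set.not_nonempty_iff_eq_empty] at hempty
  simp [trussNum, hempty] at he

lemma triCount_le_triCount {T D : Set (Sym2 V)} {u v : V}
    (hTD : ∀ f ∈ T, Shares s(u, v) f → f ∈ D) : triCount T u v ≤ triCount D u v := by
  refine Set.ncard_le_ncard ?_ (Set.toFinite _)
  rintro w ⟨huw, hvw⟩
  exact ⟨hTD _ huw ⟨u, Sym2.mem_mk_left u v, Sym2.mem_mk_left u w⟩,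
    hTD _ hvw ⟨v, Sym2.mem_mk_right u v, Sym2.mem_mk_left v w⟩⟩

/-- With scalar value `KT(e)` on each edge, every maximal α-edge-connected
component is a K-truss with `K = α`. -/
theorem stmt7 (G : SimpleGraph V) (α : ℕ) (D : Set (Sym2 V))
    (h : IsEdgeMACC G (fun e => (trussNum G e : ℝ)) (α : ℝ) D) :
    IsKTruss G α D := by
  obtain ⟨hne, hsub, hge, hmax, -⟩ := h
  refine ⟨hne, hsub, fun e he u v huv => ?_⟩
  have hαe : α ≤ trussNum G e := by simpa using hge e he
  rcases Nat.eq_zero_or_pos α with rfl | hα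
  · exact Nat.zero_le _
  obtain ⟨T, hT, heT⟩ := exists_isKTruss_trussNum (hα.trans_le hαe)
  have hTD : ∀ f ∈ T, Shares s(u, v) f → f ∈ D := by
    intro f hf hef
    by_contra hfD
    have hαf : α ≤ trussNum G f := hαe.trans (hT.le_trussNum hf)
    have hfα : (trussNum G f : ℝ) < α := hmax e he f (hT.2.1 hf) hfD (huv ▸ hef)
    exact hfα.not_ge (by exact_mod_cast hαf)
  calc α ≤ trussNum G e := hαe
    _ ≤ triCount T u v := hT.2.2 e heT u v huv
    _ ≤ triCount D u v := triCount_le_triCount hTD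
end

section
/- In Algorithm 3 (edge scalar tree construction), if edge e_j is a neighbor of e_i with j < i sharing vertex v, then when e_i is processed, the root of the subtree containing n(e_j) equals the root of the subtree containing n(v.min_id_edge), where v.min_id_edge is the edge incident to v of minimum index in the decreasing-scalar ordering. -/
variable {V : Type*} [Fintype V] [DecidableEq V]

/-- Follow the parent pointers `p` for at most `k` steps. -/
def iterParent {α : Type*} (p : α → Option α) : ℕ → α → α
  | 0, a => a
  | k + 1, a =>
    match p a with
    | none => a
    | some b => iterParent p k b

/-- The root of the current subtree containing `a` in the forest `p`. -/
def rootOf {α : Type*} [Fintype α] (p : α → Option α) (a : α) : α :=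
  iterParent p (Fintype.card α) a

/-- `v.min_id_edge`: the edge incident to `v` of minimum index in the ordering `es`. -/
def minIdEdge (es : List (V × V)) (v : V) : Option (V × V) :=
  es.find? (fun e => e.1 = v || e.2 = v)

/-- Processing edge `e` in Algorithm 3: for each `m` among the `min_id_edge`s of
the two endpoints of `e` that was processed earlier (`m ≠ e`, since such an `m`
has minimal index) and lies in a subtree not containing `e`, make `n(e)` the
parent of the root of that subtree. -/
def stepEdge (es : List (V × V)) (e : V × V) (p : V × V → Option (V × V)) :
    V × V → Option (V × V) :=
  (([minIdEdge es e.1, minIdEdge es e.2]).filterMap id).foldl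
    (fun q m =>
      if m ≠ e ∧ rootOf q m ≠ e then Function.update q (rootOf q m) (some e) else q) p

/-- The parent assignment after the first `k` edges of `es` have been processed. -/
def stateAfter (es : List (V × V)) (k : ℕ) : V × V → Option (V × V) :=
  (es.take k).foldl (fun p e => stepEdge es e p) (fun _ => none)

/-!
Parent pointers always go from an edge to an edge of larger index, so the parent relation is
acyclic and `rootOf`, which follows at most `|V × V|` pointers, reaches an actual root.
Linking a root `r` below the current edge `e` turns exactly the roots equal to `r` into `e` and
leaves every other root alone, so two edges with the same root keep having the same root. When
`e` is processed, the `min_id_edge`s of both endpoints are linked below `e`, which is still a root;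
hence `e` lands in their subtrees at that moment and stays there.
-/

open Function

section Forest

variable {α : Type*}

def IsRankedForest (p : α → Option α) (f : α → ℕ) (N : ℕ) : Prop :=
  ∀ x y, p x = some y → f x < f y ∧ f y < N

variable {p : α → Option α} {f : α → ℕ} {N : ℕ}

theorem iterParent_of_eq_none {a : α} (h : p a = none) (n : ℕ) : iterParent p n a = a := by
  cases n <;> simp [iterParent, h]

theorem iterParent_succ_of_eq_some {a b : α} (h : p a = some b) (n : ℕ) :
    iterParent p (n + 1) a = iterParent p n b := by
  simp [iterParent, h]

theorem iterParent_add (m n : ℕ) (a : α) :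
    iterParent p (m + n) a = iterParent p n (iterParent p m a) := by
  induction m generalizing a with
  | zero => simp [iterParent]
  | succ m ih =>
    rw [Nat.add_right_comm]
    cases h : p a with
    | none => simp [iterParent_of_eq_none h]
    | some b => rw [iterParent_succ_of_eq_some h, iterParent_succ_of_eq_some h, ih]

theorem iterParent_eq_self_or_mem_range (n : ℕ) (x : α) :
    iterParent p n x = x ∨ ∃ y, p y = some (iterParent p n x) := by
  induction n generalizing x with
  | zero => exact Or.inl rfl
  | succ n ih =>
    cases h : p x with
    | none => exact Or.inl (iterParent_of_eq_none h _)
    | some b =>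
      rw [iterParent_succ_of_eq_some h]
      rcases ih b with hb | hy
      · exact Or.inr ⟨x, by rw [hb]; exact h⟩
      · exact Or.inr hy

theorem IsRankedForest.mono {M : ℕ} (hp : IsRankedForest p f N) (h : N ≤ M) :
    IsRankedForest p f M :=
  fun x y hxy => (hp x y hxy).imp_right (·.trans_le h)

theorem IsRankedForest.parent_iterParent_eq_none (hp : IsRankedForest p f N) {n : ℕ} {x : α}
    (hn : N ≤ f x + n) : p (iterParent p n x) = none := by
  induction n generalizing x with
  | zero =>
    cases h : p x with
    | none => exact h
    | some y => have := hp x y h; omega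
  | succ n ih =>
    cases h : p x with
    | none => rwa [iterParent_of_eq_none h]
    | some b =>
      rw [iterParent_succ_of_eq_some h]
      exact ih (by have := hp x b h; omega)

theorem IsRankedForest.eq_none_of_le (hp : IsRankedForest p f N) {x : α} (hx : N ≤ f x) :
    p x = none :=
  hp.parent_iterParent_eq_none (n := 0) hx

theorem iterParent_update_of_forall_lt_ne [DecidableEq α] {r : α} (o : Option α) {n : ℕ}
    {x : α} (h : ∀ m < n, iterParent p m x ≠ r) :
    iterParent (update p r o) n x = iterParent p n x := by
  induction n generalizing x with
  | zero => rfl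
  | succ n ih =>
    have hux : update p r o x = p x := update_of_ne (h 0 n.succ_pos) _ _
    cases hpx : p x with
    | none => simp [iterParent, hux, hpx]
    | some b =>
      rw [iterParent_succ_of_eq_some (hux.trans hpx), iterParent_succ_of_eq_some hpx]
      refine ih fun m hm => ?_
      rw [← iterParent_succ_of_eq_some hpx]
      exact h (m + 1) (by omega)

theorem IsRankedForest.update_of_lt [DecidableEq α] (hp : IsRankedForest p f N) {r e : α}
    (hre : f r < f e) (he : f e < N) : IsRankedForest (update p r (some e)) f N := by
  intro x y hxy
  by_cases hx : x = r
  · subst hx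
    rw [update_self, Option.some_inj] at hxy
    exact hxy ▸ ⟨hre, he⟩
  · rw [update_of_ne hx] at hxy
    exact hp x y hxy

variable [Fintype α]

theorem rootOf_of_eq_none {x : α} (h : p x = none) : rootOf p x = x :=
  iterParent_of_eq_none h _

theorem IsRankedForest.parent_rootOf_eq_none (hp : IsRankedForest p f (Fintype.card α))
    (x : α) : p (rootOf p x) = none :=
  hp.parent_iterParent_eq_none (Nat.le_add_left _ _)

theorem IsRankedForest.rootOf_eq_of_iterParent_eq (hp : IsRankedForest p f (Fintype.card α))
    {n : ℕ} {x r : α} (h : iterParent p n x = r) (hr : p r = none) : rootOf p x = r := by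
  have hroot := hp.parent_rootOf_eq_none x
  have hcomm := iterParent_add (p := p) n (Fintype.card α) x
  rw [rootOf] at hroot ⊢
  rw [Nat.add_comm, iterParent_add, h, iterParent_of_eq_none hr,
    iterParent_of_eq_none hroot] at hcomm
  exact hcomm

theorem IsRankedForest.rootOf_update [DecidableEq α] (hp : IsRankedForest p f (Fintype.card α))
    {r e : α} (hr : p r = none) (he : p e = none) (hre : f r < f e)
    (hec : f e < Fintype.card α) (x : α) :
    rootOf (update p r (some e)) x = if rootOf p x = r then e else rootOf p x := by
  classical
  have hq := hp.update_of_lt hre hec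
  split_ifs with hx
  · have hex : ∃ n, iterParent p n x = r := ⟨_, hx⟩
    have hfirst : iterParent (update p r (some e)) (Nat.find hex) x = r :=
      (iterParent_update_of_forall_lt_ne _ fun m hm => Nat.find_min hex hm).trans
        (Nat.find_spec hex)
    have hnext : iterParent (update p r (some e)) (Nat.find hex + 1) x = e := by
      rw [iterParent_add, hfirst, iterParent_succ_of_eq_some (update_self r _ p)]
      rfl
    have hre' : e ≠ r := fun h => (h ▸ hre).false
    exact hq.rootOf_eq_of_iterParent_eq hnext ((update_of_ne hre' _ _).trans he)
  · exact iterParent_update_of_forall_lt_ne _ fun m _ hm =>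
      hx (hp.rootOf_eq_of_iterParent_eq hm hr)

def link [DecidableEq α] (e : α) (p : α → Option α) (m : α) : α → Option α :=
  if m ≠ e ∧ rootOf p m ≠ e then update p (rootOf p m) (some e) else p

/-- The position of the edge `e` currently being processed, with `f` its index in the ordering. -/
structure IsTopRoot (p : α → Option α) (f : α → ℕ) (e : α) : Prop where
  ranked : IsRankedForest p f (f e + 1)
  eq_none : p e = none
  eq_of_rank_eq : ∀ x, f x = f e → x = e
  rank_lt_card : f e < Fintype.card α

namespace IsTopRoot

variable {e m : α}

theorem isRankedForest_card (h : IsTopRoot p f e) : IsRankedForest p f (Fintype.card α) :=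
  h.ranked.mono h.rank_lt_card

theorem rootOf_self (h : IsTopRoot p f e) : rootOf p e = e :=
  rootOf_of_eq_none h.eq_none

theorem rank_rootOf_lt (h : IsTopRoot p f e) (hm : f m ≤ f e) (hr : rootOf p m ≠ e) :
    f (rootOf p m) < f e := by
  have hle : f (rootOf p m) ≤ f e := by
    rcases iterParent_eq_self_or_mem_range (p := p) (Fintype.card α) m with hself | ⟨y, hy⟩
    · exact (congrArg f hself).trans_le hm
    · exact Nat.le_of_lt_succ (h.ranked y _ hy).2
  exact hle.lt_of_ne fun heq => hr (h.eq_of_rank_eq _ heq)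

variable [DecidableEq α]

theorem link (h : IsTopRoot p f e) (hm : f m ≤ f e) : IsTopRoot (link e p m) f e := by
  unfold _root_.link
  split_ifs with hg
  · exact ⟨h.ranked.update_of_lt (h.rank_rootOf_lt hm hg.2) (Nat.lt_succ_self _),
      (update_of_ne (Ne.symm hg.2) _ _).trans h.eq_none, h.eq_of_rank_eq, h.rank_lt_card⟩
  · exact h

theorem rootOf_link (h : IsTopRoot p f e) (hm : f m ≤ f e) (x : α) :
    rootOf (_root_.link e p m) x = if rootOf p x = rootOf p m then e else rootOf p x := by
  unfold _root_.link
  by_cases hg : m ≠ e ∧ rootOf p m ≠ e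
  · rw [if_pos hg]
    exact h.isRankedForest_card.rootOf_update (h.isRankedForest_card.parent_rootOf_eq_none m)
      h.eq_none (h.rank_rootOf_lt hm hg.2) h.rank_lt_card x
  · rw [if_neg hg]
    have hme : rootOf p m = e := by
      by_cases hm : m = e
      · exact hm ▸ h.rootOf_self
      · exact not_not.1 fun hr => hg ⟨hm, hr⟩
    rw [hme]
    split_ifs with hx
    exacts [hx, rfl]

variable {ms : List α}

theorem foldl_link (h : IsTopRoot p f e) (hms : ∀ m ∈ ms, f m ≤ f e) :
    IsTopRoot (ms.foldl (_root_.link e) p) f e := by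
  induction ms generalizing p with
  | nil => exact h
  | cons a ms ih =>
    simp only [List.forall_mem_cons] at hms
    exact ih (h.link hms.1) hms.2

theorem rootOf_foldl_link_congr (h : IsTopRoot p f e) (hms : ∀ m ∈ ms, f m ≤ f e) {x y : α}
    (hxy : rootOf p x = rootOf p y) :
    rootOf (ms.foldl (_root_.link e) p) x = rootOf (ms.foldl (_root_.link e) p) y := by
  induction ms generalizing p with
  | nil => exact hxy
  | cons a ms ih =>
    simp only [List.forall_mem_cons] at hms
    exact ih (h.link hms.1) hms.2 (by rw [h.rootOf_link hms.1, h.rootOf_link hms.1, hxy])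

theorem rootOf_foldl_link_of_mem (h : IsTopRoot p f e) (hms : ∀ m ∈ ms, f m ≤ f e)
    (hm : m ∈ ms) : rootOf (ms.foldl (_root_.link e) p) m = e := by
  induction ms generalizing p with
  | nil => simp at hm
  | cons a ms ih =>
    simp only [List.forall_mem_cons] at hms
    have h' := h.link hms.1
    rcases List.mem_cons.1 hm with rfl | hm
    · have hme : rootOf (_root_.link e p m) m = rootOf (_root_.link e p m) e := by
        rw [h.rootOf_link hms.1, h'.rootOf_self, if_pos rfl]
      exact (h'.rootOf_foldl_link_congr hms.2 hme).trans (h'.foldl_link hms.2).rootOf_self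
    · exact ih h' hms.2 hm

end IsTopRoot

end Forest

theorem List.idxOf_le_of_find?_eq_some {α : Type*} [BEq α] [LawfulBEq α] {l : List α}
    {P : α → Bool} {a b : α} (ha : l.find? P = some a) (hb : b ∈ l) (hPb : P b) :
    l.idxOf a ≤ l.idxOf b := by
  obtain ⟨hPa, as, bs, rfl, has⟩ := List.find?_eq_some_iff_append.1 ha
  have hnot {x : α} (hx : P x) : x ∉ as := fun h => by simpa [hx] using has x h
  rw [List.idxOf_append_of_notMem (hnot hPa), List.idxOf_append_of_notMem (hnot hPb),
    List.idxOf_cons_self]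
  omega

theorem idxOf_le_of_mem_minIdEdges {W : Type*} [DecidableEq W] {es : List (W × W)} {e : W × W}
    (he : e ∈ es) :
    ∀ m ∈ [minIdEdge es e.1, minIdEdge es e.2].filterMap id, es.idxOf m ≤ es.idxOf e := by
  simp only [List.mem_filterMap, List.mem_cons, List.not_mem_nil, or_false, id]
  rintro m ⟨o, ho | ho, rfl⟩ <;>
    exact List.idxOf_le_of_find?_eq_some ho.symm he (by simp)

section Algorithm

variable {es : List (V × V)} {p : V × V → Option (V × V)} {e : V × V}

theorem stepEdge_eq_foldl_link :
    stepEdge es e p = ([minIdEdge es e.1, minIdEdge es e.2].filterMap id).foldl (link e) p :=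
  rfl

theorem IsRankedForest.isTopRoot_getElem (hnd : es.Nodup) {k : ℕ} (hk : k < es.length)
    (hp : IsRankedForest p es.idxOf k) : IsTopRoot p es.idxOf es[k] := by
  have hidx : es.idxOf es[k] = k := hnd.idxOf_getElem k hk
  refine ⟨hp.mono (by omega), hp.eq_none_of_le hidx.ge, fun x hx => ?_, ?_⟩
  · exact ((List.idxOf_inj (List.getElem_mem hk)).1 hx.symm).symm
  · rw [hidx]
    exact hk.trans_le hnd.length_le_card

theorem stateAfter_succ {k : ℕ} (hk : k < es.length) :
    stateAfter es (k + 1) = stepEdge es es[k] (stateAfter es k) := by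
  rw [stateAfter, List.take_succ_eq_append_getElem hk, List.foldl_append]
  rfl

theorem isRankedForest_stateAfter (hnd : es.Nodup) {k : ℕ} (hk : k ≤ es.length) :
    IsRankedForest (stateAfter es k) es.idxOf k := by
  induction k with
  | zero => intro x y h; simp [stateAfter] at h
  | succ k ih =>
    have hk' : k < es.length := hk
    have h := (ih hk'.le).isTopRoot_getElem hnd hk'
    have h' := (h.foldl_link (idxOf_le_of_mem_minIdEdges (List.getElem_mem hk'))).ranked
    rw [hnd.idxOf_getElem k hk', ← stepEdge_eq_foldl_link, ← stateAfter_succ hk'] at h'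
    exact h'

theorem rootOf_stateAfter_eq_of_mem_take (hnd : es.Nodup) {v : V} {m : V × V}
    (hm : minIdEdge es v = some m) {k : ℕ} (hk : k ≤ es.length) {e : V × V}
    (he : e ∈ es.take k) (hv : e.1 = v ∨ e.2 = v) :
    rootOf (stateAfter es k) e = rootOf (stateAfter es k) m := by
  induction k generalizing e with
  | zero => simp at he
  | succ k ih =>
    have hk' : k < es.length := hk
    have h := (isRankedForest_stateAfter hnd hk'.le).isTopRoot_getElem hnd hk'
    have hms := idxOf_le_of_mem_minIdEdges (List.getElem_mem hk')
    rw [stateAfter_succ hk', stepEdge_eq_foldl_link]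
    rw [List.take_succ_eq_append_getElem hk', List.mem_append, List.mem_singleton] at he
    rcases he with he | rfl
    · exact h.rootOf_foldl_link_congr hms (ih hk'.le he hv)
    · have hm' : m ∈ [minIdEdge es es[k].1, minIdEdge es es[k].2].filterMap id := by
        rcases hv with hv | hv <;> simp [hv, hm]
      rw [(h.foldl_link hms).rootOf_self, h.rootOf_foldl_link_of_mem hms hm']

end Algorithm

theorem stmt13_general (es : List (V × V)) (hnd : es.Nodup)
    (i j : Fin es.length) (hij : (j : ℕ) < (i : ℕ)) (v : V)
    (hjv : (es.get j).1 = v ∨ (es.get j).2 = v)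
    (m : V × V) (hm : minIdEdge es v = some m) :
    rootOf (stateAfter es i) (es.get j) = rootOf (stateAfter es i) m :=
  rootOf_stateAfter_eq_of_mem_take hnd hm i.isLt.le
    (List.mem_take_iff_getElem.2 ⟨j, by omega, rfl⟩) hjv

/-- In Algorithm 3, if `e_j` is a neighbor of `e_i` with `j < i` sharing vertex
`v`, then when `e_i` is processed, the root of the subtree containing `n(e_j)`
equals the root of the subtree containing `n(v.min_id_edge)`. -/
theorem stmt13 (g : V × V → ℝ) (es : List (V × V)) (hnd : es.Nodup)
    (hsort : es.Pairwise (fun a b => g b ≤ g a))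
    (i j : Fin es.length) (hij : (j : ℕ) < (i : ℕ)) (v : V)
    (hjv : (es.get j).1 = v ∨ (es.get j).2 = v)
    (hiv : (es.get i).1 = v ∨ (es.get i).2 = v)
    (m : V × V) (hm : minIdEdge es v = some m) :
    rootOf (stateAfter es i) (es.get j) = rootOf (stateAfter es i) m :=
  stmt13_general es hnd i j hij v hjv m hm
end

section
/- In an edge-scalar graph, if C₁ is a maximal α₁-edge-connected component and C₂ is a maximal α₂-edge-connected component, and some edge of C₁ shares a vertex with some edge of C₂, then C₁ ⊆ C₂ or C₂ ⊆ C₁. -/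
variable {V : Type*} [Fintype V]

/-- If a maximal α₁-edge-connected component and a maximal α₂-edge-connected
component have edges sharing a vertex, then one contains the other. -/
theorem stmt19 (G : SimpleGraph V) (g : Sym2 V → ℝ) (α₁ α₂ : ℝ)
    (D₁ D₂ : Set (Sym2 V))
    (h₁ : IsEdgeMACC G g α₁ D₁) (h₂ : IsEdgeMACC G g α₂ D₂)
    (hconn : ∃ e₁ ∈ D₁, ∃ e₂ ∈ D₂, Shares e₁ e₂) :
    D₁ ⊆ D₂ ∨ D₂ ⊆ D₁ := by
  have key : ∀ (β₁ β₂ : ℝ) (E₁ E₂ : Set (Sym2 V)), β₁ ≤ β₂ →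
      IsEdgeMACC G g β₁ E₁ → IsEdgeMACC G g β₂ E₂ →
      (∃ e₁ ∈ E₁, ∃ e₂ ∈ E₂, Shares e₁ e₂) → E₂ ⊆ E₁ := by
    intro β₁ β₂ E₁ E₂ hle h₁ h₂ hconn
    obtain ⟨_, hsub1, hge1, hmax1, _⟩ := h₁
    obtain ⟨_, hsub2, hge2, _, hconn2⟩ := h₂
    obtain ⟨e₁, he₁, e₂, he₂, hsh⟩ := hconn
    have he₂1 : e₂ ∈ E₁ := by
      by_contra h
      exact absurd (hmax1 e₁ he₁ e₂ (hsub2 he₂) h hsh)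
        (not_lt.2 (le_trans hle (hge2 e₂ he₂)))
    intro e he
    have path := hconn2 e₂ he₂ e he
    induction path with
    | refl => exact he₂1
    | tail h1 h2 ih =>
      obtain ⟨hb, hc, hsh'⟩ := h2
      by_contra hnot
      exact absurd (hmax1 _ (ih hb) _ (hsub2 hc) hnot hsh')
        (not_lt.2 (le_trans hle (hge2 _ hc)))
  obtain ⟨e₁, he₁, e₂, he₂, hsh⟩ := hconn
  rcases le_total α₁ α₂ with h | h
  · exact Or.inr (key α₁ α₂ D₁ D₂ h h₁ h₂ ⟨e₁, he₁, e₂, he₂, hsh⟩)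
  · exact Or.inl (key α₂ α₁ D₂ D₁ h h₂ h₁
      ⟨e₂, he₂, e₁, he₁, hsh.imp fun w ⟨h1, h2⟩ => ⟨h2, h1⟩⟩)
end
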